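/- arXiv:0908.3787 — 3 statements merged into one kernel-verified Lean document; each statement's English description precedes it below -/
import Mathlib

section
/- Fix C > 0 and Λ_1,…,Λ_n > 0. Define β(m) = Σ_{i: m_S > 0} m_i·log(m_i·C/(m_S·Λ_i)) for m ∈ ℝ≥0^n, where m_S = Σ_i m_i (with β(0) = 0). Then inf over m ∈ ℝ≥0^n of β(m) equals 0 if Σ_i Λ_i ≤ C, and equals −∞ otherwise. -/
/-!
Since `log u ≥ 1 - u⁻¹`, each summand satisfies `m_i log (m_i C / (m_S Λ_i)) ≥ m_i - m_S Λ_i / C`;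
summing gives `β(m) ≥ m_S (1 - Σ Λ_i / C)`, which is nonnegative when `Σ Λ_i ≤ C`, and `β(0) = 0`.
Conversely `β` is positively homogeneous and `β(Λ) = (Σ Λ_i) log (C / Σ Λ_i)`, which is negative
when `Σ Λ_i > C`, so `β(tΛ) → -∞` as `t → ∞`.
-/

open Real Finset

section RateFunction

variable {ι : Type*} [Fintype ι]

/-- The rate function `β`. Lean's `x / 0 = 0` and `log 0 = 0` supply the conventions
`0 · log 0 = 0` and `β(0) = 0`. -/
noncomputable def rateFunction (C : ℝ) (Λ m : ι → ℝ) : ℝ :=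
  ∑ i, m i * log (m i * C / ((∑ r, m r) * Λ i))

lemma sub_le_mul_log_div {x y : ℝ} (hx : 0 ≤ x) (hy : 0 < y) : x - y ≤ x * log (x / y) := by
  rcases hx.eq_or_lt with rfl | hx
  · simpa using hy.le
  · calc x - y = x * (1 - (x / y)⁻¹) := by field_simp
      _ ≤ x * log (x / y) := by gcongr; exact one_sub_inv_le_log_of_pos (by positivity)

lemma rateFunction_nonneg {C : ℝ} {Λ m : ι → ℝ} (hC : 0 < C) (hΛ : ∀ i, 0 < Λ i)
    (hΛC : ∑ i, Λ i ≤ C) (hm : ∀ i, 0 ≤ m i) : 0 ≤ rateFunction C Λ m := by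
  set S := ∑ r, m r with hS
  rcases (sum_nonneg fun i _ => hm i : 0 ≤ S).eq_or_lt with hS0 | hS0
  · have hS0 : S = 0 := hS0.symm
    simp [rateFunction, ← hS, hS0]
  have hterm (i : ι) : m i - S * Λ i / C ≤ m i * log (m i * C / (S * Λ i)) := by
    have := sub_le_mul_log_div (hm i) (show 0 < S * Λ i / C by have := hΛ i; positivity)
    rwa [div_div_eq_mul_div] at this
  have hlower : S * (C - ∑ i, Λ i) / C ≤ rateFunction C Λ m :=
    calc S * (C - ∑ i, Λ i) / C = ∑ i, (m i - S * Λ i / C) := by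
          rw [sum_sub_distrib, ← sum_div, ← mul_sum, hS]; field_simp
      _ ≤ rateFunction C Λ m := sum_le_sum fun i _ => hterm i
  exact le_trans (by have := sub_nonneg.2 hΛC; positivity) hlower

lemma rateFunction_smul (C : ℝ) (Λ m : ι → ℝ) (t : ℝ) :
    rateFunction C Λ (t • m) = t * rateFunction C Λ m := by
  rcases eq_or_ne t 0 with rfl | ht
  · simp [rateFunction]
  simp only [rateFunction, Pi.smul_apply, smul_eq_mul, ← mul_sum, mul_assoc,
    mul_div_mul_left _ _ ht]

lemma rateFunction_self (C : ℝ) {Λ : ι → ℝ} (hΛ : ∀ i, Λ i ≠ 0) :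
    rateFunction C Λ Λ = (∑ i, Λ i) * log (C / ∑ i, Λ i) := by
  have hratio (i : ι) : Λ i * C / ((∑ r, Λ r) * Λ i) = C / ∑ r, Λ r := by
    rw [mul_comm (∑ r, Λ r), mul_div_mul_left _ _ (hΛ i)]
  simp only [rateFunction, hratio]
  exact (sum_mul ..).symm

lemma exists_rateFunction_lt {C : ℝ} {Λ m : ι → ℝ} (hm : ∀ i, 0 ≤ m i)
    (hneg : rateFunction C Λ m < 0) (B : ℝ) :
    ∃ m' : ι → ℝ, (∀ i, 0 ≤ m' i) ∧ rateFunction C Λ m' < B := by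
  obtain ⟨k, hk⟩ := exists_nat_gt (B / rateFunction C Λ m)
  refine ⟨(k : ℝ) • m, fun i => by simpa using mul_nonneg k.cast_nonneg (hm i), ?_⟩
  rw [rateFunction_smul, ← div_lt_iff_of_neg hneg]
  exact hk

end RateFunction

/-- For `C > 0` and `Λ_i > 0`, with
`β(m) = Σ_i m_i·log(m_i·C/(m_S·Λ_i))` (`m_S = Σ_i m_i`, conventions `0·log 0 = 0`,
`β(0) = 0`), the infimum of `β` over `m ∈ ℝ≥0^n` is `0` if `Σ_i Λ_i ≤ C` and `−∞`
otherwise. -/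
theorem stmt10 (n : ℕ) (C : ℝ) (Λ : Fin n → ℝ) (hC : 0 < C) (hΛ : ∀ i, 0 < Λ i) :
    ((∑ i, Λ i) ≤ C →
      IsGLB
        ((fun m : Fin n → ℝ =>
            ∑ i, m i * Real.log (m i * C / ((∑ r, m r) * Λ i))) ''
          {m | ∀ i, 0 ≤ m i}) 0) ∧
    (¬ (∑ i, Λ i) ≤ C →
      ∀ B : ℝ, ∃ m : Fin n → ℝ, (∀ i, 0 ≤ m i) ∧
        (∑ i, m i * Real.log (m i * C / ((∑ r, m r) * Λ i))) < B) := by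
  refine ⟨fun hΛC => IsLeast.isGLB ⟨⟨0, fun _ => le_rfl, by simp⟩, ?_⟩, fun hCΛ => ?_⟩
  · rintro _ ⟨m, hm, rfl⟩
    exact rateFunction_nonneg hC hΛ hΛC hm
  · have hsum : C < ∑ i, Λ i := not_le.1 hCΛ
    have hsum_pos : 0 < ∑ i, Λ i := hC.trans hsum
    have hneg : rateFunction C Λ Λ < 0 := by
      rw [rateFunction_self C fun i => (hΛ i).ne']
      exact mul_neg_of_pos_of_neg hsum_pos
        (log_neg (div_pos hC hsum_pos) ((div_lt_one hsum_pos).2 hsum))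
    exact exists_rateFunction_lt (fun i => (hΛ i).le) hneg
end

section
/- Fix C > 0 and Λ_1,…,Λ_n > 0 and define β(m) = Σ_i m_i·log(m_i·C/(m_S·Λ_i)) for m ∈ ℝ≥0^n with m_S = Σ_i m_i > 0, and β(0) = 0. Then β(m) = sup over φ ∈ ℝ^n satisfying Σ_i Λ_i·e^{φ_i} ≤ C of Σ_i m_i·φ_i. In particular, β is convex and lower semicontinuous on ℝ≥0^n. -/
/-!
On the nonnegative orthant `β` is the pointwise supremum of the linear functions
`m ↦ ∑ i, m i * φ i` over the constraint set `∑ i, Λ i * exp (φ i) ≤ C`. The upper bound is the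
Fenchel–Young inequality `m φ ≤ m log (m / a) + a e^φ - m`, summed with `a_i = m_S Λ_i / C`.
The bound is approached by `φ_i = log (u m_i C / (m_S Λ_i) + c)` as `u ↑ 1`; the constant `c > 0`
keeps `φ_i` finite where `m_i = 0`. A supremum of linear continuous functions is convex and lower
semicontinuous.
-/

open Real Finset

section IsLUBImage

variable {κ X : Type*} {T : Set κ}

theorem LowerSemicontinuousOn.of_isLUB_image {β : Type*} [LinearOrder β] [TopologicalSpace β]
    [OrderTopology β] [TopologicalSpace X] {f : X → β} {s : Set X} {g : κ → X → β}
    (hg : ∀ k ∈ T, ContinuousOn (g k) s) (hf : ∀ x ∈ s, IsLUB ((fun k => g k x) '' T) (f x)) :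
    LowerSemicontinuousOn f s := by
  intro x hx y hy
  obtain ⟨_, ⟨k, hk, rfl⟩, hyk, -⟩ := (hf x hx).exists_between hy
  filter_upwards [(hg k hk x hx).eventually_const_lt hyk, self_mem_nhdsWithin] with x' hx' hs
  exact hx'.trans_le ((hf x' hs).1 ⟨k, hk, rfl⟩)

theorem ConvexOn.of_isLUB_image {𝕜 β : Type*} [Semiring 𝕜] [PartialOrder 𝕜] [AddCommMonoid X]
    [SMul 𝕜 X] [AddCommMonoid β] [PartialOrder β] [IsOrderedAddMonoid β] [SMul 𝕜 β]
    [PosSMulMono 𝕜 β] {f : X → β} {s : Set X} {g : κ → X → β} (hs : Convex 𝕜 s)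
    (hg : ∀ k ∈ T, ConvexOn 𝕜 s (g k)) (hf : ∀ x ∈ s, IsLUB ((fun k => g k x) '' T) (f x)) :
    ConvexOn 𝕜 s f := by
  refine ⟨hs, fun x hx y hy a b ha hb hab => (hf _ (hs hx hy ha hb hab)).2 ?_⟩
  rintro _ ⟨k, hk, rfl⟩
  calc g k (a • x + b • y) ≤ a • g k x + b • g k y := (hg k hk).2 hx hy ha hb hab
    _ ≤ a • f x + b • f y := by
      gcongr
      · exact (hf x hx).1 ⟨k, hk, rfl⟩
      · exact (hf y hy).1 ⟨k, hk, rfl⟩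

end IsLUBImage

theorem mul_le_mul_log_div_add_mul_exp_sub {m a : ℝ} (hm : 0 ≤ m) (ha : 0 < a) (φ : ℝ) :
    m * φ ≤ m * log (m / a) + a * exp φ - m := by
  rcases hm.eq_or_lt with rfl | hm
  · simp only [zero_mul, sub_zero, zero_add]
    positivity
  have key := add_one_le_exp (φ - log (m / a))
  rw [exp_sub, exp_log (by positivity), div_div_eq_mul_div] at key
  have := mul_le_mul_of_nonneg_left key hm.le
  rw [mul_div_cancel₀ _ hm.ne'] at this
  linarith

section QueueRate

variable {ι : Type*} [Fintype ι] {C : ℝ} {Λ m : ι → ℝ}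

noncomputable def queueRate (C : ℝ) (Λ m : ι → ℝ) : ℝ :=
  ∑ i, m i * log (m i * C / ((∑ r, m r) * Λ i))

def expConstraintSet (C : ℝ) (Λ : ι → ℝ) : Set (ι → ℝ) :=
  {φ | ∑ i, Λ i * exp (φ i) ≤ C}

theorem sum_mul_le_queueRate (hC : 0 < C) (hΛ : ∀ i, 0 < Λ i) (hm : ∀ i, 0 ≤ m i)
    {φ : ι → ℝ} (hφ : φ ∈ expConstraintSet C Λ) : ∑ i, m i * φ i ≤ queueRate C Λ m := by
  set S := ∑ r, m r
  rcases (sum_nonneg fun i _ => hm i : 0 ≤ S).eq_or_lt with hS | hS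
  · have hm0 : ∀ i, m i = 0 := fun i =>
      (sum_eq_zero_iff_of_nonneg fun i _ => hm i).1 hS.symm i (mem_univ i)
    simp [queueRate, hm0]
  calc ∑ i, m i * φ i
      ≤ ∑ i, (m i * log (m i / (S * Λ i / C)) + S * Λ i / C * exp (φ i) - m i) :=
        sum_le_sum fun i _ =>
          mul_le_mul_log_div_add_mul_exp_sub (hm i) (by have := hΛ i; positivity) (φ i)
    _ = queueRate C Λ m + S / C * ∑ i, Λ i * exp (φ i) - S := by
        simp only [sum_sub_distrib, sum_add_distrib, div_div_eq_mul_div, mul_sum, queueRate]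
        congr 2
        exact sum_congr rfl fun i _ => by ring
    _ ≤ queueRate C Λ m + S / C * C - S := by gcongr; exact hφ
    _ = queueRate C Λ m := by field_simp; ring

theorem log_mul_add_mem_expConstraintSet (hC : 0 ≤ C) (hΛ : ∀ i, 0 < Λ i) (hm : ∀ i, 0 ≤ m i)
    {u c : ℝ} (hu : 0 ≤ u) (hc : 0 < c) (hLc : (∑ j, Λ j) * c ≤ (1 - u) * C) :
    (fun i => log (u * (m i * C / ((∑ r, m r) * Λ i)) + c)) ∈ expConstraintSet C Λ := by
  set S := ∑ r, m r
  have hS : 0 ≤ S := sum_nonneg fun i _ => hm i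
  have hterm : ∀ i, Λ i * exp (log (u * (m i * C / (S * Λ i)) + c))
      = u * C * (m i / S) + Λ i * c := fun i => by
    have := hΛ i
    have := hm i
    rw [exp_log (by positivity)]
    field_simp
  -- If `S = 0` then `S / S = 0` and every `m i * C / (S * Λ i)` is `0`: no case split is needed.
  calc ∑ i, Λ i * exp (log (u * (m i * C / (S * Λ i)) + c))
      = u * C * (S / S) + (∑ j, Λ j) * c := by
        simp only [hterm, sum_add_distrib, ← mul_sum, ← sum_mul, ← sum_div]
        rfl
    _ ≤ u * C * 1 + (1 - u) * C := by
        gcongr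
        exact div_self_le_one S
    _ = C := by ring

theorem exists_mem_expConstraintSet_queueRate_sub_le (hC : 0 < C) (hΛ : ∀ i, 0 < Λ i)
    (hm : ∀ i, 0 ≤ m i) {δ : ℝ} (hδ : 0 < δ) :
    ∃ φ ∈ expConstraintSet C Λ, queueRate C Λ m - (∑ r, m r) * δ ≤ ∑ i, m i * φ i := by
  set S := ∑ r, m r
  set u := exp (-δ)
  have hu : u < 1 := exp_lt_one_iff.2 (neg_neg_of_pos hδ)
  have hL : 0 ≤ ∑ j, Λ j := sum_nonneg fun j _ => (hΛ j).le
  set c := (1 - u) * C / ((∑ j, Λ j) + 1)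
  have hc : 0 < c := div_pos (mul_pos (sub_pos.2 hu) hC) (by linarith)
  have hLc : (∑ j, Λ j) * c ≤ (1 - u) * C := by
    rw [mul_div_assoc', div_le_iff₀ (by linarith)]
    nlinarith [mul_pos (sub_pos.2 hu) hC]
  refine ⟨_, log_mul_add_mem_expConstraintSet hC.le hΛ hm (exp_pos _).le hc hLc, ?_⟩
  calc queueRate C Λ m - S * δ = ∑ i, m i * (log (m i * C / (S * Λ i)) + log u) := by
        simp only [queueRate, mul_add, sum_add_distrib, ← sum_mul, u, log_exp]
        ring
    _ ≤ ∑ i, m i * log (u * (m i * C / (S * Λ i)) + c) := sum_le_sum fun i _ => ?_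
  rcases (hm i).eq_or_lt with hmi | hmi
  · simp [← hmi]
  have := hΛ i
  have hS : 0 < S := hmi.trans_le (single_le_sum (fun j _ => hm j) (mem_univ i))
  gcongr
  rw [add_comm, ← log_mul (exp_pos _).ne' (by positivity)]
  exact log_le_log (by positivity) (le_add_of_nonneg_right hc.le)

theorem isLUB_queueRate (hC : 0 < C) (hΛ : ∀ i, 0 < Λ i) (hm : ∀ i, 0 ≤ m i) :
    IsLUB ((fun φ => ∑ i, m i * φ i) '' expConstraintSet C Λ) (queueRate C Λ m) := by
  refine ⟨?_, fun b hb => le_of_forall_pos_le_add fun ε hε => ?_⟩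
  · rintro _ ⟨φ, hφ, rfl⟩
    exact sum_mul_le_queueRate hC hΛ hm hφ
  set S := ∑ r, m r
  have hS : 0 ≤ S := sum_nonneg fun i _ => hm i
  obtain ⟨φ, hφ, hle⟩ :=
    exists_mem_expConstraintSet_queueRate_sub_le hC hΛ hm (div_pos hε (by linarith : 0 < S + 1))
  have hSε : S * (ε / (S + 1)) ≤ ε := by
    rw [mul_div_assoc', div_le_iff₀ (by linarith)]
    nlinarith
  linarith [hb ⟨φ, hφ, rfl⟩]

end QueueRate

/-- For `C > 0` and `Λ_i > 0`, the rate function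
`β(m) = Σ_i m_i·log(m_i·C/(m_S·Λ_i))` (with `β(0) = 0`) equals, on `ℝ≥0^n`, the support
function `sup {Σ_i m_i·φ_i : Σ_i Λ_i·e^{φ_i} ≤ C}`; in particular `β` is convex and
lower semicontinuous on `ℝ≥0^n`. -/
theorem stmt11 (n : ℕ) (C : ℝ) (Λ : Fin n → ℝ) (hC : 0 < C) (hΛ : ∀ i, 0 < Λ i) :
    (∀ m : Fin n → ℝ, (∀ i, 0 ≤ m i) →
      (∑ i, m i * Real.log (m i * C / ((∑ r, m r) * Λ i))) =
        sSup {x : ℝ | ∃ φ : Fin n → ℝ,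
          (∑ i, Λ i * Real.exp (φ i)) ≤ C ∧ x = ∑ i, m i * φ i}) ∧
    ConvexOn ℝ {m : Fin n → ℝ | ∀ i, 0 ≤ m i}
      (fun m : Fin n → ℝ => ∑ i, m i * Real.log (m i * C / ((∑ r, m r) * Λ i))) ∧
    LowerSemicontinuousOn
      (fun m : Fin n → ℝ => ∑ i, m i * Real.log (m i * C / ((∑ r, m r) * Λ i)))
      {m : Fin n → ℝ | ∀ i, 0 ≤ m i} := by
  have hlub : ∀ m ∈ {m : Fin n → ℝ | ∀ i, 0 ≤ m i},
      IsLUB ((fun φ => ∑ i, m i * φ i) '' expConstraintSet C Λ) (queueRate C Λ m) :=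
    fun m hm => isLUB_queueRate hC hΛ hm
  refine ⟨fun m hm => ?_,
    ConvexOn.of_isLUB_image (convex_Ici 0)
      (fun φ _ => (Fintype.linearCombination ℝ φ).convexOn (convex_Ici 0)) hlub,
    LowerSemicontinuousOn.of_isLUB_image (fun φ _ => by fun_prop) hlub⟩
  obtain ⟨φ, hφ, -⟩ := exists_mem_expConstraintSet_queueRate_sub_le hC hΛ hm one_pos
  calc _ = queueRate C Λ m := rfl
    _ = sSup ((fun φ => ∑ i, m i * φ i) '' expConstraintSet C Λ) :=
        ((hlub m hm).csSup_eq ⟨_, φ, hφ, rfl⟩).symm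
    _ = _ := congrArg sSup <|
        Set.ext fun _ => exists_congr fun _ => and_congr_right fun _ => eq_comm
end

section
/- Fix C > 0, Λ_1,…,Λ_n > 0 with Σ_i Λ_i < C, and let P be the multi-class queue stationary distribution P(m) = (1 − Σ_i Λ_i/C)·multinomial(m_S; m)·Π_i (Λ_i/C)^{m_i}. For each m ∈ ℝ≥0^n and bounded sequences σ^{(c)} ∈ ℝ^n with c·m_i + σ_i^{(c)} ∈ ℤ≥0 for all i, lim_{c→∞} (1/c)·log P(M_i = c·m_i + σ_i^{(c)} for all i) = −β(m), where β(m) = Σ_{i: m_S > 0} m_i·log(m_i·C/(m_S·Λ_i)). -/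
/-!
Write `K = ∑ i, k i` and `ρ = ∑ i, Λ i / C`. Taking logarithms,
`log P = log (1 - ρ) + log K! - ∑ i, log (k i)! + ∑ i, k i * log (Λ i / C)`.
Stirling's bounds `n log n - n ≤ log n! ≤ n log n - n + (log n) / 2 + 1` give
`(log k! - k log c) / c → x log x - x` whenever `k / c → x`; the terms `k log c` cancel because
`K = ∑ i, k i`, and the limit `S log S - ∑ i, m i log (m i) + ∑ i, m i log (Λ i / C)`, with
`S = ∑ i, m i`, rearranges to `-β(m)`.
-/

open Filter Real Topology Finset
open scoped Nat

namespace Stirling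

theorem sub_le_log_factorial (n : ℕ) : n * log n - n ≤ log n ! := by
  rcases eq_or_ne n 0 with rfl | hn
  · simp
  have h2π : 0 ≤ log (2 * π) := log_nonneg (by linarith [pi_gt_three])
  have hlog : 0 ≤ log n := log_natCast_nonneg n
  linarith [le_log_factorial_stirling hn]

theorem log_factorial_le (n : ℕ) : log n ! ≤ n * log n - n + log n / 2 + 1 := by
  obtain _ | j := n
  · simp
  have hmono : log (stirlingSeq (j + 1)) ≤ log (stirlingSeq 1) :=
    log_stirlingSeq'_antitone (Nat.zero_le j)
  have hpos : (0 : ℝ) < (j + 1 : ℕ) := by positivity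
  rw [log_stirlingSeq_formula, stirlingSeq_one, log_div (exp_ne_zero 1) (by positivity),
    log_exp, log_sqrt zero_le_two, log_mul two_ne_zero hpos.ne', log_div hpos.ne' (exp_ne_zero 1),
    log_exp] at hmono
  linarith

end Stirling

theorem tendsto_log_natCast_div_of_tendsto {k : ℕ → ℕ} {x : ℝ}
    (hk : Tendsto (fun c : ℕ => (k c : ℝ) / c) atTop (𝓝 x)) :
    Tendsto (fun c : ℕ => log (k c) / c) atTop (𝓝 0) := by
  set B := |x| + 1
  have hB : 1 ≤ B := by simp [B]
  have hbound : Tendsto (fun c : ℕ => log B / c + log c / c) atTop (𝓝 0) := by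
    simpa using (tendsto_const_div_atTop_nhds_zero_nat (log B)).add
      (isLittleO_log_id_atTop.tendsto_div_nhds_zero.comp tendsto_natCast_atTop_atTop)
  refine squeeze_zero' ?_ ?_ hbound
  · exact Eventually.of_forall fun c => div_nonneg (log_natCast_nonneg _) c.cast_nonneg
  have hlt : ∀ᶠ c : ℕ in atTop, (k c : ℝ) / c < B :=
    hk.eventually (gt_mem_nhds (by linarith [le_abs_self x]))
  filter_upwards [hlt, eventually_gt_atTop 0] with c hc hc0
  have hc1 : (1 : ℝ) ≤ c := by exact_mod_cast hc0
  have hkB : log (k c) ≤ log (B * c) := by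
    rcases (k c).eq_zero_or_pos with h | h
    · simpa [h] using log_nonneg (one_le_mul_of_one_le_of_one_le hB hc1)
    · exact log_le_log (by exact_mod_cast h) ((div_lt_iff₀ (by positivity)).mp hc).le
  rw [log_mul (by positivity) (by positivity)] at hkB
  rw [← add_div]
  gcongr

theorem tendsto_log_factorial_sub_div {k : ℕ → ℕ} {x : ℝ}
    (hk : Tendsto (fun c : ℕ => (k c : ℝ) / c) atTop (𝓝 x)) :
    Tendsto (fun c : ℕ => (log (k c)! - (k c * log (k c) - k c)) / c) atTop (𝓝 0) := by
  have hbound : Tendsto (fun c : ℕ => (log (k c) / 2 + 1) / c) atTop (𝓝 0) := by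
    simpa [add_div, div_right_comm] using ((tendsto_log_natCast_div_of_tendsto hk).div_const 2).add
      tendsto_one_div_atTop_nhds_zero_nat
  refine squeeze_zero (fun c => ?_) (fun c => ?_) hbound
  · exact div_nonneg (sub_nonneg.mpr (Stirling.sub_le_log_factorial _)) c.cast_nonneg
  · gcongr
    linarith [Stirling.log_factorial_le (k c)]

theorem tendsto_log_factorial_sub_mul_log_div {k : ℕ → ℕ} {x : ℝ}
    (hk : Tendsto (fun c : ℕ => (k c : ℝ) / c) atTop (𝓝 x)) :
    Tendsto (fun c : ℕ => (log (k c)! - k c * log c) / c) atTop (𝓝 (x * log x - x)) := by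
  have hmain : Tendsto (fun c : ℕ => (k c : ℝ) / c * log (k c / c) - k c / c) atTop
      (𝓝 (x * log x - x)) :=
    ((continuous_mul_log.sub continuous_id).tendsto x).comp hk
  simpa using ((tendsto_log_factorial_sub_div hk).add hmain).congr' <| by
    filter_upwards [eventually_gt_atTop 0] with c hc
    have hc' : (c : ℝ) ≠ 0 := by positivity
    rcases eq_or_ne (k c) 0 with h | h
    · simp [h]
    · rw [log_div (by exact_mod_cast h) hc']
      field_simp
      ring

theorem tendsto_mul_add_div_self {x B : ℝ} {σ : ℕ → ℝ} (hσ : ∀ c, |σ c| ≤ B) :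
    Tendsto (fun c : ℕ => (c * x + σ c) / c) atTop (𝓝 x) := by
  have hσc : Tendsto (fun c : ℕ => σ c / c) atTop (𝓝 0) :=
    squeeze_zero_norm (fun c => by rw [norm_div, RCLike.norm_natCast]; gcongr; exact hσ c)
      (tendsto_const_div_atTop_nhds_zero_nat B)
  simpa using (tendsto_const_nhds (x := x)).add hσc |>.congr' <| by
    filter_upwards [eventually_gt_atTop 0] with c hc
    field_simp

theorem Real.log_multinomial {ι : Type*} (s : Finset ι) (f : ι → ℕ) :
    log (Nat.multinomial s f) = log (∑ i ∈ s, f i)! - ∑ i ∈ s, log (f i)! := by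
  have hspec := congrArg (fun n : ℕ => log n) (Nat.multinomial_spec s f)
  simp only [Nat.cast_mul, Nat.cast_prod] at hspec
  rw [log_mul (by positivity) (by positivity [Nat.multinomial_pos s f]),
    log_prod (fun i _ => by positivity)] at hspec
  linarith

theorem Real.log_mul_multinomial_mul_prod_pow {ι : Type*} {s : Finset ι} {a : ℝ} {p : ι → ℝ}
    (ha : a ≠ 0) (hp : ∀ i ∈ s, p i ≠ 0) (k : ι → ℕ) :
    log (a * Nat.multinomial s k * ∏ i ∈ s, p i ^ k i) =
      log a + (log (∑ i ∈ s, k i)! - ∑ i ∈ s, log (k i)!) + ∑ i ∈ s, k i * log (p i) := by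
  have hmult : (Nat.multinomial s k : ℝ) ≠ 0 := by positivity [Nat.multinomial_pos s k]
  rw [log_mul (mul_ne_zero ha hmult) (prod_ne_zero_iff.mpr fun i hi => pow_ne_zero _ (hp i hi)),
    log_mul ha hmult, Real.log_multinomial, log_prod fun i hi => pow_ne_zero _ (hp i hi)]
  simp only [log_pow]

theorem neg_sum_mul_log_div_eq {ι : Type*} (s : Finset ι) {m p : ι → ℝ}
    (hm : ∀ i ∈ s, 0 ≤ m i) (hp : ∀ i ∈ s, p i ≠ 0) :
    -∑ i ∈ s, m i * log (m i / ((∑ j ∈ s, m j) * p i)) =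
      ((∑ i ∈ s, m i) * log (∑ i ∈ s, m i) - ∑ i ∈ s, m i) -
        ∑ i ∈ s, (m i * log (m i) - m i) + ∑ i ∈ s, m i * log (p i) := by
  set S := ∑ j ∈ s, m j
  have hterm : ∀ i ∈ s,
      m i * log (m i / (S * p i)) = m i * log (m i) - m i * log S - m i * log (p i) := by
    intro i hi
    rcases (hm i hi).eq_or_lt with h | h
    · simp [← h]
    have hS : S ≠ 0 := (h.trans_le (single_le_sum hm hi)).ne'
    rw [log_div h.ne' (mul_ne_zero hS (hp i hi)), log_mul hS (hp i hi)]
    ring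
  rw [sum_congr rfl hterm, sum_sub_distrib, sum_sub_distrib, sum_sub_distrib, ← sum_mul]
  ring

/-- Large deviations of the multi-class queue stationary distribution: for `m ∈ ℝ≥0^n`
and bounded `σ^{(c)}` with `c·m_i + σ_i^{(c)} ∈ ℤ≥0`,
`(1/c)·log P(M_i = c·m_i + σ_i^{(c)} ∀i) → −β(m)` where
`β(m) = Σ_i m_i·log(m_i·C/(m_S·Λ_i))`. -/
theorem stmt13 (n : ℕ) (C : ℝ) (Λ : Fin n → ℝ) (hC : 0 < C) (hΛ : ∀ i, 0 < Λ i)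
    (hstab : (∑ i, Λ i) < C)
    (m : Fin n → ℝ) (hm : ∀ i, 0 ≤ m i)
    (σ : ℕ → Fin n → ℝ) (hσ : ∃ B : ℝ, ∀ c i, |σ c i| ≤ B)
    (k : ℕ → Fin n → ℕ) (hk : ∀ c i, (k c i : ℝ) = (c : ℝ) * m i + σ c i) :
    Filter.Tendsto
      (fun c : ℕ => (1 / (c : ℝ)) *
        Real.log
          ((1 - ∑ i, Λ i / C) * (Nat.multinomial Finset.univ (k c) : ℝ) *
            ∏ i, (Λ i / C) ^ k c i))
      Filter.atTop
      (nhds (-(∑ i, m i * Real.log (m i * C / ((∑ r, m r) * Λ i))))) := by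
  obtain ⟨B, hB⟩ := hσ
  have hA : 1 - ∑ i, Λ i / C ≠ 0 := by
    rw [← sum_div]
    exact (sub_pos.mpr ((div_lt_one hC).mpr hstab)).ne'
  have hp : ∀ i ∈ univ, Λ i / C ≠ 0 := fun i _ => (div_pos (hΛ i) hC).ne'
  have hki : ∀ i, Tendsto (fun c : ℕ => (k c i : ℝ) / c) atTop (𝓝 (m i)) := fun i => by
    simpa only [hk] using tendsto_mul_add_div_self (fun c => hB c i)
  have hK : Tendsto (fun c : ℕ => ((∑ i, k c i : ℕ) : ℝ) / c) atTop (𝓝 (∑ i, m i)) := by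
    simpa only [Nat.cast_sum, sum_div] using tendsto_finsetSum univ fun i _ => hki i
  have hlim := (((tendsto_const_div_atTop_nhds_zero_nat (log (1 - ∑ i, Λ i / C))).add
    (tendsto_log_factorial_sub_mul_log_div hK)).sub
    (tendsto_finsetSum univ fun i _ => tendsto_log_factorial_sub_mul_log_div (hki i))).add
    (tendsto_finsetSum univ fun i _ => (hki i).mul_const (log (Λ i / C)))
  have hβ : ∀ i, m i / ((∑ r, m r) * (Λ i / C)) = m i * C / ((∑ r, m r) * Λ i) := fun i => by
    field_simp
  rw [zero_add, ← neg_sum_mul_log_div_eq univ (fun i _ => hm i) hp] at hlim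
  simp only [hβ] at hlim
  refine hlim.congr fun c => ?_
  rw [Real.log_mul_multinomial_mul_prod_pow hA hp]
  simp only [← sum_div, sum_sub_distrib, ← sum_mul, Nat.cast_sum, div_mul_eq_mul_div]
  ring
end
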